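/- arXiv:1711.07218 — 2 statements merged into one kernel-verified Lean document; each statement's English description precedes it below -/
import Mathlib

section
/- Let m ≥ 1, let P_1, …, P_m be nonempty polytopes in ℝ^d (convex hulls of finite sets), let λ = (λ_1, …, λ_m) ∈ ℝ^m with λ_i > 0 for all i and Σ λ_i = 1, and let G be a nonempty exposed face of the Cayley polytope Cay(P_1, …, P_m) = conv(⋃_{i=1}^m P_i × {e_i}) ⊆ ℝ^d × ℝ^m. Then G ∩ (ℝ^d × {λ}) is nonempty if and only if G is not contained in Cay(P_S) := conv(⋃_{i∈S} P_i × {e_i}) for any proper subset S ⊊ {1, …, m}. -/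
/-!
An extreme subset `F` of `convexHull (⋃ i, B i)` is contained in the convex hull of the points of
`⋃ i, B i` that it contains. So if the face `G` lies in no `Cay(P_S)` with `S ≠ [m]`, then for every
`j` it contains a point `(u_j, e_j)`, and the convex combination `∑ λ_j (u_j, e_j) ∈ G` lies on the
slice. Conversely, `Cay(P_S)` lies in the hyperplane `{x | x.2 j = 0}` for each `j ∉ S`, which
misses the slice because `λ_j > 0`.
-/

open Set

section Extreme

variable {𝕜 E : Type*} [Field 𝕜] [LinearOrder 𝕜] [IsStrictOrderedRing 𝕜] [AddCommGroup E]
  [Module 𝕜 E] {s F : Set E}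

theorem IsExtreme.subset_convexHull_inter (hF : IsExtreme 𝕜 (convexHull 𝕜 s) F) :
    F ⊆ convexHull 𝕜 (F ∩ s) := by
  classical
  intro x hxF
  have hx := hF.subset hxF
  rw [convexHull_eq_union_convexHull_finite_subsets, mem_iUnion₂] at hx
  obtain ⟨t, hts, hxt⟩ := hx
  induction t using Finset.induction_on generalizing x with
  | empty => simp at hxt
  | insert a t _ ih =>
    rw [Finset.coe_insert, insert_subset_iff] at hts
    rw [Finset.coe_insert] at hxt
    obtain rfl | ht := t.eq_empty_or_nonempty
    · rw [Finset.coe_empty, insert_empty_eq, convexHull_singleton, mem_singleton_iff] at hxt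
      exact subset_convexHull 𝕜 _ ⟨hxF, hxt ▸ hts.1⟩
    rw [convexHull_insert (Finset.coe_nonempty.2 ht),
      convexJoin_singleton_left, mem_iUnion₂] at hxt
    obtain ⟨y, hyt, hxy⟩ := hxt
    have hys : y ∈ convexHull 𝕜 s := convexHull_mono hts.2 hyt
    rw [← insert_endpoints_openSegment] at hxy
    rcases hxy with rfl | rfl | hxy
    · exact subset_convexHull 𝕜 _ ⟨hxF, hts.1⟩
    · exact ih hxF hts.2 hyt
    · have has : a ∈ convexHull 𝕜 s := subset_convexHull 𝕜 s hts.1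
      have haF := hF.left_mem_of_mem_openSegment has hys hxF hxy
      have hyF := hF.right_mem_of_mem_openSegment has hys hxF hxy
      exact (convex_convexHull 𝕜 _).segment_subset (subset_convexHull 𝕜 (F ∩ s) ⟨haF, hts.1⟩)
        (ih hyF hts.2 hyt) (openSegment_subset_segment 𝕜 _ _ hxy)

theorem IsExtreme.exists_inter_nonempty_of_not_subset_convexHull {ι : Type*} {B : ι → Set E}
    (hF : IsExtreme 𝕜 (convexHull 𝕜 (⋃ i, B i)) F) {S : Set ι}
    (hFS : ¬ F ⊆ convexHull 𝕜 (⋃ i ∈ S, B i)) : ∃ i ∉ S, (F ∩ B i).Nonempty := by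
  contrapose! hFS
  refine hF.subset_convexHull_inter.trans (convexHull_mono ?_)
  rintro x ⟨hxF, hx⟩
  obtain ⟨i, hxi⟩ := mem_iUnion.1 hx
  by_cases hi : i ∈ S
  · exact mem_biUnion hi hxi
  · exact (eq_empty_iff_forall_notMem.1 (hFS i hi) x ⟨hxF, hxi⟩).elim

end Extreme

section CayleyPolytope

variable {𝕜 E ι : Type*} [Field 𝕜] [LinearOrder 𝕜] [IsStrictOrderedRing 𝕜] [AddCommGroup E]
  [Module 𝕜 E] [DecidableEq ι]

theorem snd_apply_eq_zero_of_mem_convexHull_biUnion_prod_single (P : ι → Set E) {S : Set ι}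
    {j : ι} (hj : j ∉ S) {x : E × (ι → 𝕜)}
    (hx : x ∈ convexHull 𝕜 (⋃ i ∈ S, P i ×ˢ ({Pi.single i 1} : Set (ι → 𝕜)))) : x.2 j = 0 := by
  refine convexHull_min (t := {w | w.2 j = 0}) ?_
    (convex_hyperplane (f := fun w : E × (ι → 𝕜) => w.2 j) ?_ 0) hx
  · simp only [iUnion_subset_iff]
    rintro i hi ⟨u, v⟩ ⟨-, rfl : v = _⟩
    exact Pi.single_eq_of_ne (ne_of_mem_of_not_mem hi hj).symm 1
  · exact ((LinearMap.proj j).comp (LinearMap.snd 𝕜 E (ι → 𝕜))).isLinear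

end CayleyPolytope

theorem cayley_face_meets_slice_iff_general (d m : ℕ)
    (V : Fin m → Set (Fin d → ℝ))
    (lam : Fin m → ℝ) (hpos : ∀ i, 0 < lam i) (hsum : ∑ i : Fin m, lam i = 1)
    (G : Set ((Fin d → ℝ) × (Fin m → ℝ)))
    (hG : IsExposed ℝ
      (convexHull ℝ
        (⋃ i : Fin m, (convexHull ℝ (V i)) ×ˢ ({Pi.single i 1} : Set (Fin m → ℝ))))
      G) :
    (G ∩ (Set.univ ×ˢ ({lam} : Set (Fin m → ℝ)))).Nonempty ↔
      ∀ S : Finset (Fin m), S ≠ Finset.univ →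
        ¬ G ⊆ convexHull ℝ
          (⋃ i ∈ S, (convexHull ℝ (V i)) ×ˢ ({Pi.single i 1} : Set (Fin m → ℝ))) := by
  constructor
  · rintro ⟨p, hpG, -, hp : p.2 = lam⟩ S hS hGS
    obtain ⟨j, hj⟩ : ∃ j, j ∉ S := not_forall.1 (mt Finset.eq_univ_of_forall hS)
    rw [← Finset.set_biUnion_coe] at hGS
    have hpj := snd_apply_eq_zero_of_mem_convexHull_biUnion_prod_single _
      (Finset.mem_coe.not.2 hj) (hGS hpG)
    exact (hpos j).ne' (hp ▸ hpj)
  · intro hG_not_sub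
    have hvertex : ∀ j, ∃ u, (u, Pi.single j 1) ∈ G := by
      intro j
      have hS := hG_not_sub _ (Finset.erase_ssubset (Finset.mem_univ j)).ne
      rw [← Finset.set_biUnion_coe] at hS
      obtain ⟨i, hi, ⟨u, e⟩, huG, -, he : e = _⟩ :=
        hG.isExtreme.exists_inter_nonempty_of_not_subset_convexHull hS
      obtain rfl : i = j := by simpa using hi
      exact ⟨u, he ▸ huG⟩
    choose u hu using hvertex
    refine ⟨∑ j, lam j • (u j, Pi.single j 1), ?_, mem_univ _, ?_⟩
    · exact (hG.convex (convex_convexHull ℝ _)).sum_mem (fun j _ => (hpos j).le) hsum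
        (fun j _ => hu j)
    · simp_rw [Prod.snd_sum, Prod.smul_snd, ← Pi.single_smul', smul_eq_mul, mul_one]
      exact Finset.univ_sum_single lam

/-- A nonempty exposed face `G` of the Cayley polytope meets the interior Cayley slice
`ℝ^d × {λ}` if and only if `G` is not contained in any sub-Cayley polytope
`Cay(P_S) = conv (⋃ i ∈ S, P i × {e i})` for a proper subset `S ⊊ {1, …, m}`. -/
theorem cayley_face_meets_slice_iff (d m : ℕ) (hm : 1 ≤ m)
    (V : Fin m → Set (Fin d → ℝ)) (hV : ∀ i, (V i).Finite) (hVne : ∀ i, (V i).Nonempty)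
    (lam : Fin m → ℝ) (hpos : ∀ i, 0 < lam i) (hsum : ∑ i : Fin m, lam i = 1)
    (G : Set ((Fin d → ℝ) × (Fin m → ℝ)))
    (hG : IsExposed ℝ
      (convexHull ℝ
        (⋃ i : Fin m, (convexHull ℝ (V i)) ×ˢ ({Pi.single i 1} : Set (Fin m → ℝ))))
      G)
    (hGne : G.Nonempty) :
    (G ∩ (Set.univ ×ˢ ({lam} : Set (Fin m → ℝ)))).Nonempty ↔
      ∀ S : Finset (Fin m), S ≠ Finset.univ →
        ¬ G ⊆ convexHull ℝ
          (⋃ i ∈ S, (convexHull ℝ (V i)) ×ˢ ({Pi.single i 1} : Set (Fin m → ℝ))) :=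
  cayley_face_meets_slice_iff_general d m V lam hpos hsum G hG
end

section
/- Let m ≥ 1, let P_1, …, P_m be nonempty polytopes in ℝ^d (convex hulls of finite sets), and let i be a natural number. Then the number of nonempty exposed faces G of the Cayley polytope Cay(P_1, …, P_m) = conv(⋃_{j=1}^m P_j × {e_j}) ⊆ ℝ^d × ℝ^m such that dim(affine span of G) = i + m − 1 and G is not contained in Cay(P_S) := conv(⋃_{j∈S} P_j × {e_j}) for any proper subset S ⊊ {1, …, m}, equals the number of nonempty exposed faces F of the Minkowski sum P_1 + P_2 + ⋯ + P_m with dim(affine span of F) = i. -/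
open Pointwise

/-- The Cayley polytope `Cay(P 1, …, P m) = conv (⋃ i, P i × {e i}) ⊆ ℝ^d × ℝ^m`. -/
def cayleyPolytope (d m : ℕ) (V : Fin m → Set (Fin d → ℝ)) :
    Set ((Fin d → ℝ) × (Fin m → ℝ)) :=
  convexHull ℝ (⋃ i : Fin m, (convexHull ℝ (V i)) ×ˢ ({Pi.single i 1} : Set (Fin m → ℝ)))

/-- The sub-Cayley polytope `Cay(P_S) = conv (⋃ i ∈ S, P i × {e i})`. -/
def subCayleyPolytope (d m : ℕ) (V : Fin m → Set (Fin d → ℝ)) (S : Finset (Fin m)) :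
    Set ((Fin d → ℝ) × (Fin m → ℝ)) :=
  convexHull ℝ (⋃ i ∈ S, (convexHull ℝ (V i)) ×ˢ ({Pi.single i 1} : Set (Fin m → ℝ)))

/-!
A nonempty exposed face of the Cayley polytope is cut out by a functional `L (x, y)`; it lies in
no proper sub-Cayley polytope exactly when every layer `P j × {e j}` attains the maximum of `L`,
and then it is the Cayley polytope of the faces `F j` of the `P j` exposed by `f = L (·, 0)`.
The exposed faces of the Minkowski sum are likewise the sums `∑ F j` of such families. The
family `(F j)` is recovered from the Cayley face as its slices at the vertices `e j`, and from
the sum as its summands, so both sides are in bijection with these families. For `a j ∈ F j`,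
the shear `(x, y) ↦ (x - ∑ y j • a j, y)` maps the vector span of the Cayley face onto the
product of the vector span of `∑ F j` with that of the simplex `{e j}`, which accounts for the
shift of the dimension by `m - 1`.
-/

open Set Module

theorem Set.finsetSum_nonempty {M ι : Type*} [AddCommMonoid M] {A : ι → Set M}
    (hA : ∀ j, (A j).Nonempty) (s : Finset ι) : (∑ j ∈ s, A j).Nonempty :=
  ⟨_, finsetSum_mem_finsetSum s A _ fun j _ => (hA j).some_mem⟩

theorem convexHull_inter_subset_of_le {E : Type*} [AddCommGroup E] [Module ℝ E] {s : Set E}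
    {l : E →ₗ[ℝ] ℝ} {M : ℝ} (hs : ∀ x ∈ s, l x ≤ M) :
    convexHull ℝ s ∩ {x | M ≤ l x} ⊆ convexHull ℝ {x ∈ s | M ≤ l x} := by
  have hle : ∀ x ∈ convexHull ℝ s, l x ≤ M :=
    fun x hx => convexHull_min hs (convex_halfSpace_le l.isLinear M) hx
  -- `C` is convex: a proper convex combination reaches the level `M` only if both ends do.
  let C := {x ∈ convexHull ℝ s | M ≤ l x → x ∈ convexHull ℝ {x ∈ s | M ≤ l x}}
  have hC : Convex ℝ C := by
    intro x hx y hy a b ha hb hab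
    refine ⟨convex_convexHull ℝ s hx.1 hy.1 ha hb hab, fun hM => ?_⟩
    rcases ha.eq_or_lt with rfl | ha'
    · rw [zero_add] at hab
      subst hab
      simpa using hy.2 (by simpa using hM)
    rcases hb.eq_or_lt with rfl | hb'
    · rw [add_zero] at hab
      subst hab
      simpa using hx.2 (by simpa using hM)
    have hlx := hle x hx.1
    have hly := hle y hy.1
    simp only [map_add, map_smul, smul_eq_mul] at hM
    obtain rfl : b = 1 - a := by linarith
    exact convex_convexHull ℝ _ (hx.2 (by nlinarith)) (hy.2 (by nlinarith)) ha hb hab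
  have hsC : s ⊆ C := fun y hy =>
    ⟨subset_convexHull ℝ s hy, fun h => subset_convexHull ℝ {x ∈ s | M ≤ l x} ⟨hy, h⟩⟩
  rintro x ⟨hx, hMx⟩
  exact (convexHull_min hsC hC hx).2 hMx

namespace ContinuousLinearMap

variable {E : Type*} [AddCommGroup E] [Module ℝ E] [TopologicalSpace E] (l : StrongDual ℝ E)

theorem toExposed_add (A B : Set E) : l.toExposed (A + B) = l.toExposed A + l.toExposed B := by
  ext x
  constructor
  · rintro ⟨⟨a, ha, b, hb, rfl⟩, hmax⟩
    refine add_mem_add ⟨ha, fun a' ha' => ?_⟩ ⟨hb, fun b' hb' => ?_⟩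
    · simpa using hmax (a' + b) (add_mem_add ha' hb)
    · simpa using hmax (a + b') (add_mem_add ha hb')
  · rintro ⟨a, ⟨ha, hamax⟩, b, ⟨hb, hbmax⟩, rfl⟩
    refine ⟨add_mem_add ha hb, ?_⟩
    rintro _ ⟨a', ha', b', hb', rfl⟩
    simpa using add_le_add (hamax a' ha') (hbmax b' hb')

theorem toExposed_sum {ι : Type*} (s : Finset ι) (A : ι → Set E) :
    l.toExposed (∑ j ∈ s, A j) = ∑ j ∈ s, l.toExposed (A j) := by
  induction s using Finset.cons_induction with
  | empty => ext x; simp +contextual [toExposed]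
  | cons a s ha ih => rw [Finset.sum_cons, Finset.sum_cons, toExposed_add, ih]

theorem toExposed_eq_setOf_add_mem {A B : Set E} (hB : (l.toExposed B).Nonempty) :
    l.toExposed A = {x ∈ A | ∃ y ∈ B, x + y ∈ l.toExposed (A + B)} := by
  ext x
  constructor
  · intro hx
    obtain ⟨y, hy⟩ := hB
    exact ⟨hx.1, y, hy.1, l.toExposed_add A B ▸ add_mem_add hx hy⟩
  · rintro ⟨hx, y, hy, hxy⟩
    exact ⟨hx, fun z hz => by simpa using hxy.2 (z + y) (add_mem_add hz hy)⟩

theorem toExposed_nonempty {A : Set E} (hA : IsCompact A) (hne : A.Nonempty) :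
    (l.toExposed A).Nonempty := by
  obtain ⟨x, hx, hmax⟩ := hA.exists_isMaxOn hne l.continuous.continuousOn
  exact ⟨x, hx, hmax⟩

theorem toExposed_iUnion {ι : Type*} (A : ι → Set E)
    (h : ∀ j, (l.toExposed (⋃ k, A k) ∩ A j).Nonempty) :
    l.toExposed (⋃ j, A j) = ⋃ j, l.toExposed (A j) := by
  ext x
  simp only [mem_iUnion]
  constructor
  · rintro ⟨hx, hmax⟩
    obtain ⟨j, hj⟩ := mem_iUnion.1 hx
    exact ⟨j, hj, fun y hy => hmax y (mem_iUnion_of_mem j hy)⟩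
  · rintro ⟨j, hx, hmax⟩
    refine ⟨mem_iUnion_of_mem j hx, fun y hy => ?_⟩
    obtain ⟨z, hz, hzj⟩ := h j
    exact (hz.2 y hy).trans (hmax z hzj)

theorem toExposed_prod_singleton {F : Type*} [AddCommGroup F] [Module ℝ F] [TopologicalSpace F]
    (L : StrongDual ℝ (E × F)) (A : Set E) (v : F) :
    L.toExposed (A ×ˢ {v}) = (L ∘L inl ℝ E F).toExposed A ×ˢ {v} := by
  have hL : ∀ x, L (x, v) = (L ∘L inl ℝ E F) x + L (0, v) := fun x => by
    rw [comp_apply, inl_apply, ← map_add, Prod.mk_add_mk, add_zero, zero_add]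
  ext ⟨x, y⟩
  simp only [toExposed, mem_prod, mem_singleton_iff, Prod.forall]
  constructor
  · rintro ⟨⟨hx, rfl⟩, hmax⟩
    refine ⟨⟨hx, fun x' hx' => ?_⟩, rfl⟩
    have := hmax x' y ⟨hx', rfl⟩
    rwa [hL x', hL x, add_le_add_iff_right] at this
  · rintro ⟨⟨hx, hmax⟩, rfl⟩
    refine ⟨⟨hx, rfl⟩, ?_⟩
    rintro x' _ ⟨hx', rfl⟩
    rw [hL x', hL x, add_le_add_iff_right]
    exact hmax x' hx'

theorem toExposed_convexHull {s : Set E} (h : (l.toExposed s).Nonempty) :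
    l.toExposed (convexHull ℝ s) = convexHull ℝ (l.toExposed s) := by
  obtain ⟨x₀, hx₀, hmax⟩ := h
  have hface : l.toExposed s = {x ∈ s | l x₀ ≤ l x} := by
    ext x
    exact and_congr_right fun hx => ⟨fun h => h x₀ hx₀, fun h y hy => (hmax y hy).trans h⟩
  have hle : ∀ x ∈ convexHull ℝ s, l x ≤ l x₀ :=
    fun x hx => convexHull_min hmax (convex_halfSpace_le l.isLinear _) hx
  rw [hface]
  apply Subset.antisymm
  · rintro x ⟨hx, hxmax⟩
    exact convexHull_inter_subset_of_le (l := (l : E →ₗ[ℝ] ℝ)) hmax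
      (mem_inter hx (hxmax x₀ (subset_convexHull ℝ s hx₀)))
  · refine convexHull_min (fun x hx => ⟨subset_convexHull ℝ s hx.1, fun y hy => ?_⟩)
      (toExposed.isExposed.convex (convex_convexHull ℝ s))
    exact (hle y hy).trans hx.2

end ContinuousLinearMap

section Cayley

open ContinuousLinearMap

variable {E : Type*} [AddCommGroup E] [Module ℝ E] {ι : Type*} [DecidableEq ι]

def cayleyHull (P : ι → Set E) : Set (E × (ι → ℝ)) :=
  convexHull ℝ (⋃ j, P j ×ˢ {Pi.single j 1})

theorem snd_apply_eq_zero_of_mem_convexHull {A : ι → Set E} {S : Finset ι} {j : ι} (hj : j ∉ S)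
    {p : E × (ι → ℝ)} (hp : p ∈ convexHull ℝ (⋃ i ∈ S, A i ×ˢ {Pi.single i 1})) : p.2 j = 0 := by
  let K := LinearMap.ker ((LinearMap.proj j).comp (LinearMap.snd ℝ E (ι → ℝ)))
  suffices hK : ⋃ i ∈ S, A i ×ˢ {Pi.single i 1} ⊆ (K : Set (E × (ι → ℝ))) by
    simpa [K] using convexHull_min hK K.convex hp
  intro q hq
  simp only [mem_iUnion, mem_prod, mem_singleton_iff] at hq
  obtain ⟨i, hi, -, hq⟩ := hq
  have hij : i ≠ j := fun h => hj (h ▸ hi)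
  simp [K, hq, hij]

theorem not_cayleyHull_subset [Fintype ι] {t : ι → Set E} (ht : ∀ j, (t j).Nonempty) (P : ι → Set E)
    {S : Finset ι} (hS : S ≠ Finset.univ) :
    ¬ cayleyHull t ⊆ convexHull ℝ (⋃ j ∈ S, P j ×ˢ {Pi.single j 1}) := by
  obtain ⟨j, hj⟩ : ∃ j, j ∉ S := by
    by_contra! h
    exact hS (Finset.eq_univ_iff_forall.2 h)
  obtain ⟨x, hx⟩ := ht j
  intro hsub
  have := snd_apply_eq_zero_of_mem_convexHull hj
    (hsub (subset_convexHull ℝ _ (mem_iUnion_of_mem j (mk_mem_prod hx rfl))))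
  simp at this

theorem mk_single_mem_cayleyHull_iff {t : ι → Set E} (ht : ∀ j, Convex ℝ (t j)) {x : E} {j : ι} :
    (x, Pi.single j 1) ∈ cayleyHull t ↔ x ∈ t j := by
  refine ⟨fun hx => ?_, fun hx => subset_convexHull ℝ _ (mem_iUnion_of_mem j (mk_mem_prod hx rfl))⟩
  let l : E × (ι → ℝ) →ₗ[ℝ] ℝ := (LinearMap.proj j).comp (LinearMap.snd ℝ E (ι → ℝ))
  have hl : ∀ y k, l (y, Pi.single k 1) = if j = k then 1 else 0 := fun y k => by
    simp [l, Pi.single_apply]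
  have hle : ∀ p ∈ ⋃ k, t k ×ˢ {Pi.single k 1}, l p ≤ 1 := by
    simp only [mem_iUnion, mem_prod, mem_singleton_iff]
    rintro ⟨y, _⟩ ⟨k, -, rfl⟩
    rw [hl]
    split_ifs <;> norm_num
  have htop : {p ∈ ⋃ k, t k ×ˢ {Pi.single k 1} | 1 ≤ l p} ⊆ t j ×ˢ {Pi.single j 1} := by
    simp only [mem_iUnion, mem_prod, mem_singleton_iff]
    rintro ⟨y, _⟩ ⟨⟨k, hy, rfl⟩, h1⟩
    rw [hl] at h1
    split_ifs at h1 with hjk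
    · exact ⟨hjk ▸ hy, hjk ▸ rfl⟩
    · norm_num at h1
  have := convexHull_mono htop (convexHull_inter_subset_of_le hle ⟨hx, by simp [hl]⟩)
  rw [convexHull_prod, convexHull_singleton, (ht j).convexHull_eq] at this
  exact this.1

theorem cayleyHull_injOn : InjOn cayleyHull {t : ι → Set E | ∀ j, Convex ℝ (t j)} := by
  intro t ht t' ht' h
  funext j
  ext x
  rw [← mk_single_mem_cayleyHull_iff ht, ← mk_single_mem_cayleyHull_iff ht', h]

variable [TopologicalSpace E]

theorem toExposed_cayleyHull [Nonempty ι] (L : StrongDual ℝ (E × (ι → ℝ))) (P : ι → Set E)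
    (h : ∀ j, (L.toExposed (⋃ k, P k ×ˢ {Pi.single k 1}) ∩ P j ×ˢ {Pi.single j 1}).Nonempty) :
    L.toExposed (cayleyHull P) = cayleyHull fun j => (L ∘L inl ℝ E (ι → ℝ)).toExposed (P j) := by
  obtain ⟨j⟩ := ‹Nonempty ι›
  rw [cayleyHull, L.toExposed_convexHull ((h j).mono inter_subset_left), L.toExposed_iUnion _ h]
  simp only [toExposed_prod_singleton]
  rfl

end Cayley

section Dimension

variable {E : Type*} [AddCommGroup E] [Module ℝ E] {ι : Type*}

theorem vectorSpan_iUnion_prod_singleton {F : Type*} [AddCommGroup F] [Module ℝ F]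
    (H : ι → Set E) (v : ι → F) (h0 : ∀ j, (0 : E) ∈ H j) :
    vectorSpan ℝ (⋃ j, H j ×ˢ {v j}) =
      (Submodule.span ℝ (⋃ j, H j)).prod (vectorSpan ℝ (range v)) := by
  have hmem : ∀ {x j}, x ∈ H j → (x, v j) ∈ ⋃ j, H j ×ˢ {v j} :=
    fun hx => mem_iUnion_of_mem _ (mk_mem_prod hx rfl)
  apply le_antisymm
  · rw [vectorSpan_def, Submodule.span_le]
    rintro _ ⟨p, hp, q, hq, rfl⟩
    simp only [mem_iUnion, mem_prod, mem_singleton_iff] at hp hq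
    obtain ⟨j, hpj, hpv⟩ := hp
    obtain ⟨k, hqk, hqv⟩ := hq
    refine ⟨Submodule.sub_mem _ (Submodule.subset_span (mem_iUnion_of_mem j hpj))
      (Submodule.subset_span (mem_iUnion_of_mem k hqk)), ?_⟩
    have := vsub_mem_vectorSpan ℝ (mem_range_self (f := v) j) (mem_range_self k)
    rw [vsub_eq_sub] at this
    simpa [hpv, hqv] using this
  · rw [LinearMap.prod_eq_sup_map]
    refine sup_le ?_ ?_ <;> rw [Submodule.map_le_iff_le_comap]
    · rw [Submodule.span_le]
      intro x hx
      obtain ⟨j, hx⟩ := mem_iUnion.1 hx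
      simpa using vsub_mem_vectorSpan ℝ (hmem hx) (hmem (h0 j))
    · rw [vectorSpan_def ℝ (range v), Submodule.span_le]
      rintro _ ⟨_, ⟨j, rfl⟩, _, ⟨k, rfl⟩, rfl⟩
      simpa using vsub_mem_vectorSpan ℝ (hmem (h0 j)) (hmem (h0 k))

theorem span_iUnion_image_sub_eq_vectorSpan_sum [Fintype ι] [DecidableEq ι] {G : ι → Set E}
    {a : ι → E} (ha : ∀ j, a j ∈ G j) :
    Submodule.span ℝ (⋃ j, (· - a j) '' G j) = vectorSpan ℝ (∑ j, G j) := by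
  have hsum : ∀ {b : ι → E}, (∀ j, b j ∈ G j) → ∑ j, b j ∈ ∑ j, G j :=
    fun hb => finsetSum_mem_finsetSum _ _ _ fun j _ => hb j
  rw [vectorSpan_eq_span_vsub_set_right ℝ (hsum ha)]
  apply le_antisymm <;> rw [Submodule.span_le]
  · rintro _ ⟨_, ⟨j, rfl⟩, x, hx, rfl⟩
    have hupd : ∀ k, Function.update a j x k ∈ G k := fun k => by
      rcases eq_or_ne k j with rfl | hkj
      · simpa using hx
      · simpa [hkj] using ha k
    refine Submodule.subset_span ⟨_, hsum hupd, ?_⟩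
    simp only [vsub_eq_sub, Finset.sum_update_of_mem (Finset.mem_univ j),
      ← Finset.add_sum_erase _ a (Finset.mem_univ j), Finset.sdiff_singleton_eq_erase]
    abel
  · rintro _ ⟨y, hy, rfl⟩
    obtain ⟨g, hg, rfl⟩ := (mem_fintype_sum _ _).1 hy
    change ∑ j, g j - ∑ j, a j ∈ _
    rw [← Finset.sum_sub_distrib]
    exact Submodule.sum_mem _ fun j _ =>
      Submodule.subset_span (mem_iUnion_of_mem j ⟨g j, hg j, rfl⟩)

theorem Submodule.finrank_prod {F : Type*} [AddCommGroup F] [Module ℝ F] (p : Submodule ℝ E)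
    (q : Submodule ℝ F) [FiniteDimensional ℝ p] [FiniteDimensional ℝ q] :
    finrank ℝ (p.prod q) = finrank ℝ p + finrank ℝ q := by
  rw [← p.range_subtype, ← q.range_subtype, ← LinearMap.range_prodMap,
    LinearMap.finrank_range_of_inj, Module.finrank_prod, p.range_subtype, q.range_subtype]
  exact p.injective_subtype.prodMap q.injective_subtype

variable [Fintype ι]

def cayleyShear (a : ι → E) : E × (ι → ℝ) →ₗ[ℝ] E × (ι → ℝ) :=
  (LinearMap.fst ℝ E _ - Fintype.linearCombination ℝ a ∘ₗ LinearMap.snd ℝ E _).prod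
    (LinearMap.snd ℝ E _)

theorem cayleyShear_apply (a : ι → E) (x : E) (y : ι → ℝ) :
    cayleyShear a (x, y) = (x - ∑ k, y k • a k, y) := by
  simp [cayleyShear, Fintype.linearCombination_apply]

theorem cayleyShear_injective (a : ι → E) : Function.Injective (cayleyShear a) := by
  rintro ⟨x, y⟩ ⟨x', y'⟩ h
  rw [cayleyShear_apply, cayleyShear_apply, Prod.mk.injEq] at h
  obtain ⟨h, rfl⟩ := h
  rw [sub_left_inj] at h
  rw [h]

variable [DecidableEq ι]

theorem image_cayleyShear_prod_single (a : ι → E) (A : Set E) (j : ι) :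
    cayleyShear a '' A ×ˢ {Pi.single j 1} = ((· - a j) '' A) ×ˢ {Pi.single j 1} := by
  have hsum : ∑ k, (Pi.single j 1 : ι → ℝ) k • a k = a j := by simp [Pi.single_apply]
  ext ⟨x, y⟩
  simp only [mem_image, mem_prod, mem_singleton_iff, Prod.exists, cayleyShear_apply,
    Prod.mk.injEq]
  constructor
  · rintro ⟨z, _, ⟨hz, rfl⟩, rfl, rfl⟩
    exact ⟨⟨z, hz, by rw [hsum]⟩, rfl⟩
  · rintro ⟨⟨z, hz, rfl⟩, rfl⟩
    exact ⟨z, _, ⟨hz, rfl⟩, by rw [hsum], rfl⟩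

theorem finrank_vectorSpan_iUnion_prod_single [Nonempty ι] [FiniteDimensional ℝ E]
    {G : ι → Set E} (hG : ∀ j, (G j).Nonempty) :
    finrank ℝ (vectorSpan ℝ (⋃ j, G j ×ˢ ({Pi.single j 1} : Set (ι → ℝ)))) =
      finrank ℝ (vectorSpan ℝ (∑ j, G j)) + (Fintype.card ι - 1) := by
  choose a ha using hG
  have hmap : (vectorSpan ℝ (⋃ j, G j ×ˢ ({Pi.single j 1} : Set (ι → ℝ)))).map (cayleyShear a) =
      vectorSpan ℝ (⋃ j, ((· - a j) '' G j) ×ˢ ({Pi.single j 1} : Set (ι → ℝ))) := by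
    rw [← iUnion_congr fun j => image_cayleyShear_prod_single a (G j) j, ← image_iUnion]
    exact (cayleyShear a).toAffineMap.map_vectorSpan
  have hsimplex : finrank ℝ (vectorSpan ℝ (range fun j : ι => (Pi.single j 1 : ι → ℝ))) =
      Fintype.card ι - 1 :=
    (Pi.linearIndependent_single_one ι ℝ).affineIndependent.finrank_vectorSpan
      (Nat.succ_pred_eq_of_pos Fintype.card_pos).symm
  rw [(Submodule.equivMapOfInjective _ (cayleyShear_injective a) _).finrank_eq, hmap,
    vectorSpan_iUnion_prod_singleton (fun j => (· - a j) '' G j) _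
      fun j => ⟨a j, ha j, sub_self (a j)⟩,
    Submodule.finrank_prod, span_iUnion_image_sub_eq_vectorSpan_sum ha, hsimplex]

theorem finrank_direction_affineSpan_cayleyHull [Nonempty ι] [FiniteDimensional ℝ E]
    {t : ι → Set E} (ht : ∀ j, (t j).Nonempty) :
    finrank ℝ (affineSpan ℝ (cayleyHull t)).direction =
      finrank ℝ (affineSpan ℝ (∑ j, t j)).direction + (Fintype.card ι - 1) := by
  rw [cayleyHull, affineSpan_convexHull, direction_affineSpan, direction_affineSpan]
  exact finrank_vectorSpan_iUnion_prod_single ht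

end Dimension

section CayleyFaces

open ContinuousLinearMap

variable {E : Type*} [AddCommGroup E] [Module ℝ E] [TopologicalSpace E]
  {ι : Type*} [Fintype ι] [DecidableEq ι] [Nonempty ι]

theorem isExposed_cayleyHull_toExposed (l : StrongDual ℝ E) {P : ι → Set E}
    (hP : ∀ j, (l.toExposed (P j)).Nonempty) :
    IsExposed ℝ (cayleyHull P) (cayleyHull fun j => l.toExposed (P j)) := by
  choose z hz using hP
  -- `L (x, e k) = l x - max (l '' P k)`, so every layer attains the maximum `0` of `L`.
  let L : StrongDual ℝ (E × (ι → ℝ)) :=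
    l ∘L fst ℝ E (ι → ℝ) - (∑ j, l (z j) • proj j) ∘L snd ℝ E (ι → ℝ)
  have hL : ∀ x k, L (x, Pi.single k 1) = l x - l (z k) := fun x k => by
    simp [L, Pi.single_apply]
  have hLinl : L ∘L inl ℝ E (ι → ℝ) = l := by
    ext x
    simp [L]
  have hmax : ∀ j, (z j, Pi.single j 1) ∈ L.toExposed (⋃ k, P k ×ˢ {Pi.single k 1}) := by
    refine fun j => ⟨mem_iUnion_of_mem j (mk_mem_prod (hz j).1 rfl), ?_⟩
    simp only [mem_iUnion, mem_prod, mem_singleton_iff]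
    rintro ⟨x, _⟩ ⟨k, hx, rfl⟩
    rw [hL, hL, sub_self, sub_nonpos]
    exact (hz k).2 x hx
  refine fun _ => ⟨L, Eq.symm ?_⟩
  change L.toExposed (cayleyHull P) = _
  rw [toExposed_cayleyHull L P fun j => ⟨_, hmax j, mk_mem_prod (hz j).1 rfl⟩, hLinl]

theorem exists_toExposed_eq_of_isExposed_cayleyHull {P : ι → Set E} (hP : ∀ j, IsCompact (P j))
    {G : Set (E × (ι → ℝ))} (hG : IsExposed ℝ (cayleyHull P) G) (hGne : G.Nonempty)
    (hGS : ∀ S : Finset ι, S ≠ Finset.univ →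
      ¬ G ⊆ convexHull ℝ (⋃ j ∈ S, P j ×ˢ {Pi.single j 1})) :
    ∃ l : StrongDual ℝ E, cayleyHull (fun j => l.toExposed (P j)) = G := by
  obtain ⟨L, hL⟩ := hG hGne
  change G = L.toExposed (cayleyHull P) at hL
  subst hL
  set s := ⋃ k, P k ×ˢ ({Pi.single k 1} : Set (ι → ℝ))
  have hs : (L.toExposed s).Nonempty :=
    L.toExposed_nonempty (isCompact_iUnion fun k => (hP k).prod isCompact_singleton)
      (convexHull_nonempty_iff.1 ⟨_, hGne.some_mem.1⟩)
  have hmeet : ∀ j, (L.toExposed s ∩ P j ×ˢ {Pi.single j 1}).Nonempty := by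
    intro j
    by_contra hj
    refine hGS (Finset.univ.erase j) (Finset.erase_ssubset (Finset.mem_univ j)).ne ?_
    rw [cayleyHull, L.toExposed_convexHull hs]
    refine convexHull_mono fun p hp => ?_
    obtain ⟨k, hk⟩ := mem_iUnion.1 hp.1
    have hkj : k ≠ j := by
      rintro rfl
      exact hj ⟨p, hp, hk⟩
    exact mem_biUnion (Finset.mem_erase.2 ⟨hkj, Finset.mem_univ k⟩) hk
  exact ⟨_, (toExposed_cayleyHull L P hmeet).symm⟩

end CayleyFaces

section FaceCorrespondence

open ContinuousLinearMap

variable {E : Type*} [AddCommGroup E] [Module ℝ E] [TopologicalSpace E]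
  {ι : Type*} [Fintype ι] [DecidableEq ι] {P : ι → Set E}

def exposedFaceFamilies (P : ι → Set E) : Set (ι → Set E) :=
  range fun (l : StrongDual ℝ E) j => l.toExposed (P j)

theorem injOn_sum_exposedFaceFamilies
    (hP : ∀ (l : StrongDual ℝ E) j, (l.toExposed (P j)).Nonempty) :
    InjOn (fun t => ∑ j, t j) (exposedFaceFamilies P) := by
  have hsummand : ∀ (l : StrongDual ℝ E) j, l.toExposed (P j) =
      {x ∈ P j | ∃ y ∈ ∑ k ∈ Finset.univ.erase j, P k, x + y ∈ ∑ k, l.toExposed (P k)} := by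
    intro l j
    rw [← toExposed_sum, ← Finset.add_sum_erase _ P (Finset.mem_univ j)]
    exact l.toExposed_eq_setOf_add_mem (by rw [toExposed_sum]; exact finsetSum_nonempty (hP l) _)
  rintro _ ⟨l, rfl⟩ _ ⟨l', rfl⟩ h
  funext j
  dsimp only at h ⊢
  rw [hsummand l, hsummand l', h]

theorem bijOn_sum_exposedFaceFamilies (hcpt : ∀ j, IsCompact (P j)) (hne : ∀ j, (P j).Nonempty)
    (n : ℕ) :
    BijOn (fun t => ∑ j, t j)
      {t ∈ exposedFaceFamilies P | finrank ℝ (affineSpan ℝ (∑ j, t j)).direction = n}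
      {F | IsExposed ℝ (∑ j, P j) F ∧ F.Nonempty ∧ finrank ℝ (affineSpan ℝ F).direction = n} := by
  have hface : ∀ (l : StrongDual ℝ E) j, (l.toExposed (P j)).Nonempty :=
    fun l j => l.toExposed_nonempty (hcpt j) (hne j)
  refine ⟨?_, (injOn_sum_exposedFaceFamilies hface).mono (sep_subset _ _), ?_⟩
  · rintro _ ⟨⟨l, rfl⟩, hdim⟩
    refine ⟨?_, finsetSum_nonempty (hface l) _, hdim⟩
    dsimp only
    rw [← toExposed_sum]
    exact toExposed.isExposed
  · rintro F ⟨hF, hFne, hdim⟩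
    obtain ⟨l, hl⟩ := hF hFne
    change F = l.toExposed (∑ j, P j) at hl
    rw [hl, toExposed_sum] at hdim ⊢
    exact ⟨_, ⟨⟨l, rfl⟩, hdim⟩, rfl⟩

theorem bijOn_cayleyHull_exposedFaceFamilies [Nonempty ι] [FiniteDimensional ℝ E]
    (hconv : ∀ j, Convex ℝ (P j)) (hcpt : ∀ j, IsCompact (P j)) (hne : ∀ j, (P j).Nonempty)
    (n : ℕ) :
    BijOn cayleyHull
      {t ∈ exposedFaceFamilies P | finrank ℝ (affineSpan ℝ (∑ j, t j)).direction = n}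
      {G | IsExposed ℝ (cayleyHull P) G ∧ G.Nonempty ∧
        finrank ℝ (affineSpan ℝ G).direction = n + (Fintype.card ι - 1) ∧
        ∀ S : Finset ι, S ≠ Finset.univ →
          ¬ G ⊆ convexHull ℝ (⋃ j ∈ S, P j ×ˢ {Pi.single j 1})} := by
  have hface : ∀ (l : StrongDual ℝ E) j, (l.toExposed (P j)).Nonempty :=
    fun l j => l.toExposed_nonempty (hcpt j) (hne j)
  refine ⟨?_, cayleyHull_injOn.mono ?_, ?_⟩
  · rintro _ ⟨⟨l, rfl⟩, hdim⟩
    obtain ⟨j⟩ := ‹Nonempty ι›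
    refine ⟨isExposed_cayleyHull_toExposed l (hface l),
      ⟨_, subset_convexHull ℝ _ (mem_iUnion_of_mem j (mk_mem_prod (hface l j).some_mem rfl))⟩,
      by rw [finrank_direction_affineSpan_cayleyHull (hface l), hdim],
      fun S hS => not_cayleyHull_subset (hface l) P hS⟩
  · rintro _ ⟨⟨l, rfl⟩, -⟩ j
    exact toExposed.isExposed.convex (hconv j)
  · rintro G ⟨hG, hGne, hdim, hGS⟩
    obtain ⟨l, rfl⟩ := exists_toExposed_eq_of_isExposed_cayleyHull hcpt hG hGne hGS
    rw [finrank_direction_affineSpan_cayleyHull (hface l), Nat.add_right_cancel_iff] at hdim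
    exact ⟨_, ⟨⟨l, rfl⟩, hdim⟩, rfl⟩

end FaceCorrespondence

/-- Face-count identity `f_{i+m-1}(T°_{[m]}) = f_i(|P_{[m]}|)`: the number of
`(i+m-1)`-dimensional nonempty exposed faces of the Cayley polytope not contained in any
proper sub-Cayley polytope equals the number of `i`-dimensional nonempty exposed faces of
the Minkowski sum `P 1 + ⋯ + P m`. -/
theorem cayley_face_count (d m : ℕ) (hm : 1 ≤ m)
    (V : Fin m → Set (Fin d → ℝ)) (hV : ∀ i, (V i).Finite) (hVne : ∀ i, (V i).Nonempty)
    (i : ℕ) :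
    Nat.card {G : Set ((Fin d → ℝ) × (Fin m → ℝ)) //
        IsExposed ℝ (cayleyPolytope d m V) G ∧ G.Nonempty ∧
          Module.finrank ℝ (affineSpan ℝ G).direction = i + m - 1 ∧
          ∀ S : Finset (Fin m), S ≠ Finset.univ → ¬ G ⊆ subCayleyPolytope d m V S} =
      Nat.card {F : Set (Fin d → ℝ) //
        IsExposed ℝ (∑ j : Fin m, convexHull ℝ (V j)) F ∧ F.Nonempty ∧
          Module.finrank ℝ (affineSpan ℝ F).direction = i} := by
  have : Nonempty (Fin m) := ⟨⟨0, hm⟩⟩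
  have hconv : ∀ j, Convex ℝ (convexHull ℝ (V j)) := fun j => convex_convexHull ℝ (V j)
  have hcpt : ∀ j, IsCompact (convexHull ℝ (V j)) := fun j => (hV j).isCompact_convexHull ℝ
  have hne : ∀ j, (convexHull ℝ (V j)).Nonempty := fun j => (hVne j).convexHull
  have hcay := bijOn_cayleyHull_exposedFaceFamilies hconv hcpt hne i
  rw [Fintype.card_fin, ← Nat.add_sub_assoc hm] at hcay
  exact (Nat.card_congr (hcay.equiv _)).symm.trans
    (Nat.card_congr ((bijOn_sum_exposedFaceFamilies hcpt hne i).equiv _))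
end
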